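/- arXiv:2602.07280 — 2 statements merged into one kernel-verified Lean document; each statement's English description precedes it below -/
import Mathlib

section
/- Upper direction of the guaranteed-distortion identity: for any distribution Q on Y with Q(B_d(x)) > 0 for all x in the support of P_X, the kernel K(x) = Q restricted to B_d(x) and normalized satisfies the constraint P(d(X,Y) ≤ d) = 1 and has I(X;Y) ≤ E[-log Q(B_d(X))]. Hence R_X(d,0) ≤ R_X⁺(d,0). -/
noncomputable section

/-- `q` is a probability mass function on the finite alphabet `α`. -/
def isPMF {α : Type*} [Fintype α] (q : α → ℝ) : Prop :=
  (∀ a, 0 ≤ q a) ∧ ∑ a, q a = 1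

/-- Shannon entropy (in bits) of a pmf on a finite alphabet. -/
def ent {α : Type*} [Fintype α] (q : α → ℝ) : ℝ :=
  ∑ a, -(q a * Real.logb 2 (q a))

/-- Relative entropy (Kullback–Leibler divergence, in bits) between pmfs. -/
def klDiv {α : Type*} [Fintype α] (μ ν : α → ℝ) : ℝ :=
  ∑ a, μ a * Real.logb 2 (μ a / ν a)

/-- Probability, under `Q`, of the distortion-`D` ball around `x`:
`Q(B_D(x)) = Q {y : df x y ≤ D}`. -/
def probBall {X Y : Type*} [Fintype Y] (Q : Y → ℝ) (df : X → Y → ℝ) (D : ℝ) (x : X) : ℝ :=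
  ∑ y, if df x y ≤ D then Q y else 0

/-- Output marginal `P_Y` induced by input pmf `p` and kernel `K`. -/
def marg {X Y : Type*} [Fintype X] [Fintype Y] (p : X → ℝ) (K : X → Y → ℝ) : Y → ℝ :=
  fun y => ∑ x, p x * K x y

/-- Mutual information (in bits) `I(X;Y)` of the joint law `p ⊗ K`,
written as `E_X [ D(K(X) ‖ P_Y) ]`. -/
def mutInfo {X Y : Type*} [Fintype X] [Fintype Y] (p : X → ℝ) (K : X → Y → ℝ) : ℝ :=
  ∑ x, p x * klDiv (K x) (marg p K)

/-- Binary relative entropy `d(α‖q)` (in bits). -/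
def bdiv (a q : ℝ) : ℝ :=
  a * Real.logb 2 (a / q) + (1 - a) * Real.logb 2 ((1 - a) / (1 - q))

section Helpers

open Finset

lemma probBall_nonneg' {X Y : Type*} [Fintype Y] (Q : Y → ℝ) (hQ : ∀ y, 0 ≤ Q y)
    (df : X → Y → ℝ) (D : ℝ) (x : X) : 0 ≤ probBall Q df D x := by
  apply Finset.sum_nonneg; intro y _; split <;> simp [hQ y]

lemma logsum_le' {Y : Type*} [Fintype Y] (μ ν : Y → ℝ) (hμ : ∀ y, 0 ≤ μ y)
    (hν : ∀ y, 0 ≤ ν y) (hsum : ∑ y, ν y ≤ ∑ y, μ y)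
    (hac : ∀ y, 0 < μ y → 0 < ν y) :
    ∑ y, μ y * Real.logb 2 (ν y / μ y) ≤ 0 := by
  have h2 : (0:ℝ) < Real.log 2 := Real.log_pos (by norm_num)
  have key : ∀ y, μ y * Real.logb 2 (ν y / μ y) ≤ (ν y - μ y) / Real.log 2 := by
    intro y
    rcases (hμ y).eq_or_lt with h | h
    · rw [← h]; simp only [zero_mul, sub_zero]
      exact div_nonneg (hν y) h2.le
    · have hνy := hac y h
      have hd : 0 < ν y / μ y := div_pos hνy h
      have hlog := Real.log_le_sub_one_of_pos hd
      have : μ y * Real.logb 2 (ν y / μ y) ≤ μ y * ((ν y / μ y - 1) / Real.log 2) := by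
        rw [Real.logb]
        gcongr
      calc μ y * Real.logb 2 (ν y / μ y) ≤ μ y * ((ν y / μ y - 1) / Real.log 2) := this
        _ = (ν y - μ y) / Real.log 2 := by field_simp
  calc ∑ y, μ y * Real.logb 2 (ν y / μ y) ≤ ∑ y, (ν y - μ y) / Real.log 2 :=
        Finset.sum_le_sum fun y _ => key y
    _ = (∑ y, ν y - ∑ y, μ y) / Real.log 2 := by
        rw [← Finset.sum_div, Finset.sum_sub_distrib]
    _ ≤ 0 := div_nonpos_of_nonpos_of_nonneg (by linarith) h2.le

lemma klDiv_nonneg' {Y : Type*} [Fintype Y] (μ ν : Y → ℝ) (hμ : ∀ y, 0 ≤ μ y)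
    (hν : ∀ y, 0 ≤ ν y) (hsum : ∑ y, ν y ≤ ∑ y, μ y)
    (hac : ∀ y, 0 < μ y → 0 < ν y) : 0 ≤ klDiv μ ν := by
  have heq : klDiv μ ν = - ∑ y, μ y * Real.logb 2 (ν y / μ y) := by
    rw [klDiv, ← Finset.sum_neg_distrib]
    apply Finset.sum_congr rfl
    intro y _
    rcases (hμ y).eq_or_lt with h | h
    · rw [← h]; ring
    · have hνy := hac y h
      rw [show μ y / ν y = (ν y / μ y)⁻¹ by rw [inv_div], Real.logb_inv]; ring
  rw [heq]
  linarith [logsum_le' μ ν hμ hν hsum hac]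

lemma marg_nonneg' {X Y : Type*} [Fintype X] [Fintype Y] (p : X → ℝ) (K : X → Y → ℝ)
    (hp : ∀ x, 0 ≤ p x) (hK : ∀ x, 0 < p x → ∀ y, 0 ≤ K x y) (y : Y) :
    0 ≤ marg p K y := by
  apply Finset.sum_nonneg; intro x _
  rcases (hp x).eq_or_lt with h | h
  · rw [← h]; simp
  · exact mul_nonneg h.le (hK x h y)

lemma marg_sum' {X Y : Type*} [Fintype X] [Fintype Y] (p : X → ℝ) (K : X → Y → ℝ)
    (hp : isPMF p) (hK : ∀ x, 0 < p x → ∑ y, K x y = 1) :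
    ∑ y, marg p K y = 1 := by
  unfold marg
  rw [Finset.sum_comm]
  have : ∀ x, ∑ y, p x * K x y = p x := by
    intro x
    rw [← Finset.mul_sum]
    rcases (hp.1 x).eq_or_lt with h | h
    · rw [← h]; ring
    · rw [hK x h]; ring
  rw [Finset.sum_congr rfl fun x _ => this x, hp.2]

lemma mutInfo_nonneg' {X Y : Type*} [Fintype X] [Fintype Y] (p : X → ℝ) (K : X → Y → ℝ)
    (hp : isPMF p) (hK : ∀ x, 0 < p x → isPMF (K x)) : 0 ≤ mutInfo p K := by
  apply Finset.sum_nonneg; intro x _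
  rcases (hp.1 x).eq_or_lt with h | h
  · rw [← h]; simp
  · apply mul_nonneg h.le
    apply klDiv_nonneg' _ _ (hK x h).1
        (marg_nonneg' p K hp.1 (fun x' hx' y => (hK x' hx').1 y))
    · rw [marg_sum' p K hp (fun x' hx' => (hK x' hx').2), (hK x h).2]
    · intro y hy
      calc (0:ℝ) < p x * K x y := mul_pos h hy
        _ ≤ marg p K y := Finset.single_le_sum
            (f := fun x' => p x' * K x' y)
            (fun x' _ => by
              rcases (hp.1 x').eq_or_lt with h' | h'
              · rw [← h']; simp
              · exact mul_nonneg h'.le ((hK x' h').1 y))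
            (Finset.mem_univ x)

lemma mutInfo_le_bound' {X Y : Type*} [Fintype X] [Fintype Y]
    (p : X → ℝ) (df : X → Y → ℝ) (D : ℝ) (hp : isPMF p)
    (Q : Y → ℝ) (hQ : isPMF Q) (hQB : ∀ x, 0 < p x → 0 < probBall Q df D x)
    (K : X → Y → ℝ)
    (hKdef : ∀ x, 0 < p x → ∀ y, K x y = if df x y ≤ D then Q y / probBall Q df D x else 0) :
    mutInfo p K ≤ ∑ x, p x * (- Real.logb 2 (probBall Q df D x)) := by
  set pb := probBall Q df D with hpbdef
  set m := marg p K with hmdef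
  have hKnn : ∀ x, 0 < p x → ∀ y, 0 ≤ K x y := by
    intro x hx y
    rw [hKdef x hx y]
    split
    · exact div_nonneg (hQ.1 y) (hQB x hx).le
    · exact le_refl _
  have hKsum : ∀ x, 0 < p x → ∑ y, K x y = 1 := by
    intro x hx
    have h1 : ∑ y, K x y = (∑ y, if df x y ≤ D then Q y else 0) / pb x := by
      rw [Finset.sum_div]
      apply Finset.sum_congr rfl
      intro y _
      rw [hKdef x hx y]
      split <;> simp
    rw [h1]
    exact div_self (ne_of_gt (hQB x hx))
  have hmnn : ∀ y, 0 ≤ m y := marg_nonneg' p K hp.1 hKnn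
  have hmsum : ∑ y, m y = 1 := marg_sum' p K hp hKsum
  have hmac : ∀ y, 0 < m y → 0 < Q y := by
    intro y hy
    by_contra hq
    have hq0 : Q y = 0 := le_antisymm (not_lt.mp hq) (hQ.1 y)
    have : m y = 0 := by
      rw [hmdef]
      apply Finset.sum_eq_zero
      intro x _
      rcases (hp.1 x).eq_or_lt with h | h
      · rw [← h]; ring
      · rw [hKdef x h y, hq0]
        split <;> simp
    linarith
  have hkl : ∀ x, 0 < p x →
      klDiv (K x) m = - Real.logb 2 (pb x) + ∑ y, K x y * Real.logb 2 (Q y / m y) := by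
    intro x hx
    have hterm : ∀ y, K x y * Real.logb 2 (K x y / m y)
        = K x y * (- Real.logb 2 (pb x)) + K x y * Real.logb 2 (Q y / m y) := by
      intro y
      rcases (hKnn x hx y).eq_or_lt with h | h
      · rw [← h]; ring
      · have hball : df x y ≤ D := by
          by_contra hb
          rw [hKdef x hx y, if_neg hb] at h
          exact lt_irrefl 0 h
        have hKxy : K x y = Q y / pb x := by rw [hKdef x hx y, if_pos hball]
        have hQy : 0 < Q y := by
          have h2 : 0 < (Q y / pb x) * pb x := mul_pos (hKxy ▸ h) (hQB x hx)
          rwa [div_mul_cancel₀ _ (ne_of_gt (hQB x hx))] at h2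
        have hmy : 0 < m y := by
          calc (0:ℝ) < p x * K x y := mul_pos hx h
            _ ≤ m y := Finset.single_le_sum
                (f := fun x' => p x' * K x' y)
                (fun x' _ => by
                  rcases (hp.1 x').eq_or_lt with h' | h'
                  · rw [← h']; simp
                  · exact mul_nonneg h'.le (hKnn x' h' y))
                (Finset.mem_univ x)
        have hrw : K x y / m y = (Q y / m y) * (pb x)⁻¹ := by
          rw [hKxy]; field_simp
        rw [hrw, Real.logb_mul (ne_of_gt (div_pos hQy hmy))
            (inv_ne_zero (ne_of_gt (hQB x hx))), Real.logb_inv]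
        ring
    have h1 : klDiv (K x) m = ∑ y, K x y * Real.logb 2 (K x y / m y) := rfl
    rw [h1, Finset.sum_congr rfl fun y _ => hterm y, Finset.sum_add_distrib,
      ← Finset.sum_mul, hKsum x hx, one_mul]
  have hsplit : mutInfo p K = (∑ x, p x * (- Real.logb 2 (pb x)))
      + ∑ x, p x * ∑ y, K x y * Real.logb 2 (Q y / m y) := by
    rw [mutInfo, ← Finset.sum_add_distrib]
    apply Finset.sum_congr rfl
    intro x _
    rcases (hp.1 x).eq_or_lt with h | h
    · rw [← h]; ring
    · rw [← hmdef, hkl x h]; ring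
  have hS : ∑ x, p x * ∑ y, K x y * Real.logb 2 (Q y / m y)
      = ∑ y, m y * Real.logb 2 (Q y / m y) := by
    simp_rw [Finset.mul_sum]
    rw [Finset.sum_comm]
    apply Finset.sum_congr rfl
    intro y _
    rw [hmdef]
    show _ = (∑ x, p x * K x y) * _
    rw [Finset.sum_mul]
    apply Finset.sum_congr rfl
    intro x _
    ring
  have hS0 : ∑ y, m y * Real.logb 2 (Q y / m y) ≤ 0 :=
    logsum_le' m Q hmnn hQ.1 (by rw [hmsum, hQ.2]) hmac
  rw [hsplit, hS]
  linarith

end Helpers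

/-- achievability direction of the guaranteed-distortion identity.
For any pmf `Q` with `Q(B_D(x)) > 0` on the support of `p`, the kernel
`K x = Q` restricted to `B_D(x)` and normalized is feasible (a pmf supported on the
ball) and satisfies `I(X;Y) ≤ E[-log₂ Q(B_D(X))]`; hence `R_X(d,0) ≤ R_X⁺(d,0)`. -/
theorem guaranteed_achievability {X Y : Type*} [Fintype X] [Fintype Y] [Nonempty Y]
    (p : X → ℝ) (df : X → Y → ℝ) (D : ℝ) (hp : isPMF p)
    (Q : Y → ℝ) (hQ : isPMF Q) (hQB : ∀ x, 0 < p x → 0 < probBall Q df D x)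
    (K : X → Y → ℝ)
    (hKdef : ∀ x y, K x y = if df x y ≤ D then Q y / probBall Q df D x else 0) :
    (∀ x, 0 < p x →
        isPMF (K x) ∧ (∀ y, ¬ df x y ≤ D → K x y = 0)) ∧
    mutInfo p K ≤ ∑ x, p x * (- Real.logb 2 (probBall Q df D x)) ∧
    sInf {r : ℝ | ∃ K' : X → Y → ℝ, (∀ x, isPMF (K' x)) ∧
        (∀ x, 0 < p x → ∀ y, ¬ df x y ≤ D → K' x y = 0) ∧ r = mutInfo p K'} ≤
      sInf {r : ℝ | ∃ Q' : Y → ℝ, isPMF Q' ∧ (∀ x, 0 < p x → 0 < probBall Q' df D x) ∧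
        r = ∑ x, p x * (- Real.logb 2 (probBall Q' df D x))} := by
  have hKpmf : ∀ x, 0 < p x → isPMF (K x) := by
    intro x hx
    constructor
    · intro y
      rw [hKdef x y]
      split
      · exact div_nonneg (hQ.1 y) (hQB x hx).le
      · exact le_refl _
    · have h1 : ∑ y, K x y = (∑ y, if df x y ≤ D then Q y else 0) / probBall Q df D x := by
        rw [Finset.sum_div]
        apply Finset.sum_congr rfl
        intro y _
        rw [hKdef x y]
        split <;> simp
      rw [h1]
      exact div_self (ne_of_gt (hQB x hx))
  refine ⟨fun x hx => ⟨hKpmf x hx, fun y hy => by rw [hKdef x y, if_neg hy]⟩,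
    mutInfo_le_bound' p df D hp Q hQ hQB K (fun x _ y => hKdef x y), ?_⟩
  set A := {r : ℝ | ∃ K' : X → Y → ℝ, (∀ x, isPMF (K' x)) ∧
      (∀ x, 0 < p x → ∀ y, ¬ df x y ≤ D → K' x y = 0) ∧ r = mutInfo p K'} with hA
  set B := {r : ℝ | ∃ Q' : Y → ℝ, isPMF Q' ∧ (∀ x, 0 < p x → 0 < probBall Q' df D x) ∧
      r = ∑ x, p x * (- Real.logb 2 (probBall Q' df D x))} with hB
  have hBne : B.Nonempty := ⟨_, Q, hQ, hQB, rfl⟩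
  have hAbdd : BddBelow A := by
    refine ⟨0, fun r hr => ?_⟩
    obtain ⟨K', hK'pmf, _, rfl⟩ := hr
    exact mutInfo_nonneg' p K' hp (fun x _ => hK'pmf x)
  apply le_csInf hBne
  intro b hb
  obtain ⟨Q', hQ', hQB', rfl⟩ := hb
  set K'' : X → Y → ℝ := fun x y =>
    if 0 < probBall Q' df D x then
      (if df x y ≤ D then Q' y / probBall Q' df D x else 0)
    else (Fintype.card Y : ℝ)⁻¹ with hK''
  have hcard : (0:ℝ) < (Fintype.card Y : ℝ) := by
    exact_mod_cast Fintype.card_pos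
  have hK''pmf : ∀ x, isPMF (K'' x) := by
    intro x
    by_cases hpb : 0 < probBall Q' df D x
    · constructor
      · intro y
        simp only [hK'', if_pos hpb]
        split
        · exact div_nonneg (hQ'.1 y) hpb.le
        · exact le_refl _
      · have h1 : ∑ y, K'' x y = (∑ y, if df x y ≤ D then Q' y else 0) / probBall Q' df D x := by
          rw [Finset.sum_div]
          apply Finset.sum_congr rfl
          intro y _
          simp only [hK'', if_pos hpb]
          split <;> simp
        rw [h1]
        exact div_self (ne_of_gt hpb)
    · constructor
      · intro y
        simp only [hK'', if_neg hpb]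
        positivity
      · have h1 : ∀ y, K'' x y = (Fintype.card Y : ℝ)⁻¹ := by
          intro y; simp only [hK'', if_neg hpb]
        rw [Finset.sum_congr rfl fun y _ => h1 y, Finset.sum_const, Finset.card_univ,
          nsmul_eq_mul, mul_inv_cancel₀ (ne_of_gt hcard)]
  have hK''supp : ∀ x, 0 < p x → ∀ y, ¬ df x y ≤ D → K'' x y = 0 := by
    intro x hx y hy
    simp only [hK'', if_pos (hQB' x hx), if_neg hy]
  have hmem : mutInfo p K'' ∈ A := ⟨K'', hK''pmf, hK''supp, rfl⟩
  calc sInf A ≤ mutInfo p K'' := csInf_le hAbdd hmem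
    _ ≤ ∑ x, p x * (- Real.logb 2 (probBall Q' df D x)) := by
        apply mutInfo_le_bound' p df D hp Q' hQ' hQB' K''
        intro x hx y
        simp only [hK'', if_pos (hQB' x hx)]
end
end

section
/- Lower direction of the guaranteed-distortion identity: for any kernel P_{Y|X} with P(d(X,Y) ≤ d) = 1 and induced marginal P_Y, I(X;Y) = E_X[D(P_{Y|X}‖P_Y)] ≥ E[-log P_Y(B_d(X))] ≥ R_X⁺(d,0). Hence R_X⁺(d,0) ≤ R_X(d,0). -/
noncomputable section

/-!
Each `K x` is supported on the ball `B_D(x)`, so data processing for relative entropy under the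
indicator of that ball gives `D(K x ‖ P_Y) ≥ -log₂ P_Y(B_D(x))`; averaging over `x` gives
`I(X;Y) ≥ E[-log₂ P_Y(B_D(X))]`. The marginal `P_Y` is itself a competitor in the infimum
defining `R_X⁺(D, 0)`, which gives the other two inequalities.
-/

open Finset Real

/-- `K` is feasible at distortion `D`: `df X Y ≤ D` almost surely under `p ⊗ K`. -/
def IsFeasible {X Y : Type*} (p : X → ℝ) (df : X → Y → ℝ) (D : ℝ) (K : X → Y → ℝ) :
    Prop :=
  ∀ x, 0 < p x → ∀ y, ¬ df x y ≤ D → K x y = 0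

def expectedBallLogLoss {X Y : Type*} [Fintype X] [Fintype Y] (p : X → ℝ) (df : X → Y → ℝ)
    (D : ℝ) (Q : Y → ℝ) : ℝ :=
  ∑ x, p x * -logb 2 (probBall Q df D x)

/-- The values whose infimum is `R_X⁺(D, 0)`. -/
def achievableBallLogLosses {X Y : Type*} [Fintype X] [Fintype Y] (p : X → ℝ)
    (df : X → Y → ℝ) (D : ℝ) : Set ℝ :=
  {r | ∃ Q : Y → ℝ, isPMF Q ∧ (∀ x, 0 < p x → 0 < probBall Q df D x) ∧
    r = expectedBallLogLoss p df D Q}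

lemma concaveOn_logb_two_Ioi : ConcaveOn ℝ (Set.Ioi 0) (logb 2) := by
  have h : logb 2 = fun x => (log 2)⁻¹ * log x := funext fun x => div_eq_inv_mul _ _
  rw [h]
  exact strictConcaveOn_log_Ioi.concaveOn.smul (inv_nonneg.mpr (log_pos one_lt_two).le)

/-- Data processing for relative entropy under the indicator of `S`, via Jensen on the support
of `μ`. -/
lemma neg_logb_sum_le_klDiv {Y : Type*} [Fintype Y] {μ ν : Y → ℝ} (hμ : isPMF μ)
    (hν : ∀ y, 0 ≤ ν y) (habs : ∀ y, 0 < μ y → 0 < ν y) {S : Finset Y}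
    (hsupp : ∀ y, μ y ≠ 0 → y ∈ S) :
    -logb 2 (∑ y ∈ S, ν y) ≤ klDiv μ ν := by
  classical
  set T : Finset Y := univ.filter (fun y => 0 < μ y)
  have pos_of_ne {y} (h : μ y ≠ 0) : 0 < μ y := (hμ.1 y).lt_of_ne' h
  have hμT : ∑ y ∈ T, μ y = 1 :=
    (sum_filter_of_ne fun y _ h => pos_of_ne h).trans hμ.2
  have hklT : klDiv μ ν = ∑ y ∈ T, μ y * logb 2 (μ y / ν y) :=
    (sum_filter_of_ne fun y _ h => pos_of_ne (left_ne_zero_of_mul h)).symm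
  have hνT_pos : 0 < ∑ y ∈ T, ν y := by
    obtain ⟨y, hy, -⟩ := exists_ne_zero_of_sum_ne_zero (hμT ▸ one_ne_zero)
    exact sum_pos' (fun y _ => hν y) ⟨y, hy, habs y (mem_filter.mp hy).2⟩
  have hνT_le : ∑ y ∈ T, ν y ≤ ∑ y ∈ S, ν y :=
    sum_le_sum_of_subset_of_nonneg (fun y hy => hsupp y (mem_filter.mp hy).2.ne')
      fun y _ _ => hν y
  have jensen : ∑ y ∈ T, μ y * logb 2 (ν y / μ y) ≤ logb 2 (∑ y ∈ T, ν y) := by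
    have h := concaveOn_logb_two_Ioi.le_map_sum (t := T) (w := μ) (p := fun y => ν y / μ y)
      (fun y _ => hμ.1 y) hμT fun y hy =>
        div_pos (habs y (mem_filter.mp hy).2) (mem_filter.mp hy).2
    refine h.trans_eq (congrArg (logb 2) (sum_congr rfl fun y hy => ?_))
    exact mul_div_cancel₀ _ (mem_filter.mp hy).2.ne'
  calc -logb 2 (∑ y ∈ S, ν y) ≤ -logb 2 (∑ y ∈ T, ν y) :=
        neg_le_neg (logb_le_logb_of_le one_lt_two hνT_pos hνT_le)
    _ ≤ -∑ y ∈ T, μ y * logb 2 (ν y / μ y) := neg_le_neg jensen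
    _ = klDiv μ ν := by
        rw [hklT, ← sum_neg_distrib]
        refine sum_congr rfl fun y _ => ?_
        rw [← inv_div, logb_inv, mul_neg, neg_neg]

section

variable {X Y : Type*} [Fintype Y] {p : X → ℝ} {K : X → Y → ℝ}

lemma mul_le_marg [Fintype X] (hp : isPMF p) (hK : ∀ x, isPMF (K x)) (x : X) (y : Y) :
    p x * K x y ≤ marg p K y :=
  single_le_sum (f := fun x' => p x' * K x' y) (fun x' _ => mul_nonneg (hp.1 x') ((hK x').1 y))
    (mem_univ x)

lemma isPMF_marg [Fintype X] (hp : isPMF p) (hK : ∀ x, isPMF (K x)) : isPMF (marg p K) := by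
  refine ⟨fun y => sum_nonneg fun x _ => mul_nonneg (hp.1 x) ((hK x).1 y), ?_⟩
  simp only [marg]
  rw [sum_comm]
  simp_rw [← mul_sum, (hK _).2, mul_one, hp.2]

variable {df : X → Y → ℝ} {D : ℝ}

lemma probBall_eq_sum_filter (Q : Y → ℝ) (x : X) :
    probBall Q df D x = ∑ y ∈ univ.filter (fun y => df x y ≤ D), Q y :=
  (sum_filter _ _).symm

lemma probBall_le_one {Q : Y → ℝ} (hQ : isPMF Q) (x : X) : probBall Q df D x ≤ 1 := by
  rw [probBall_eq_sum_filter, ← hQ.2]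
  exact sum_le_sum_of_subset_of_nonneg (filter_subset _ _) fun y _ _ => hQ.1 y

lemma expectedBallLogLoss_nonneg [Fintype X] (hp : isPMF p) {Q : Y → ℝ} (hQ : isPMF Q)
    (hQpos : ∀ x, 0 < p x → 0 < probBall Q df D x) : 0 ≤ expectedBallLogLoss p df D Q := by
  refine sum_nonneg fun x _ => ?_
  rcases (hp.1 x).eq_or_lt with h | h
  · rw [← h, zero_mul]
  · exact mul_nonneg h.le
      (neg_nonneg.mpr (logb_nonpos one_lt_two (hQpos x h).le (probBall_le_one hQ x)))

lemma mem_support_of_isFeasible (hfeas : IsFeasible p df D K) {x : X} (hx : 0 < p x) (y : Y)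
    (hy : K x y ≠ 0) : y ∈ univ.filter (fun y => df x y ≤ D) :=
  mem_filter.mpr ⟨mem_univ y, not_not.mp fun hd => hy (hfeas x hx y hd)⟩

lemma probBall_marg_pos [Fintype X] (hp : isPMF p) (hK : ∀ x, isPMF (K x))
    (hfeas : IsFeasible p df D K) {x : X} (hx : 0 < p x) : 0 < probBall (marg p K) df D x := by
  obtain ⟨y, -, hy⟩ := exists_ne_zero_of_sum_ne_zero ((hK x).2 ▸ one_ne_zero)
  rw [probBall_eq_sum_filter]
  refine sum_pos' (fun y _ => (isPMF_marg hp hK).1 y)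
    ⟨y, mem_support_of_isFeasible hfeas hx y hy, ?_⟩
  exact (mul_pos hx (((hK x).1 y).lt_of_ne' hy)).trans_le (mul_le_marg hp hK x y)

lemma expectedBallLogLoss_marg_le_mutInfo [Fintype X] (hp : isPMF p) (hK : ∀ x, isPMF (K x))
    (hfeas : IsFeasible p df D K) : expectedBallLogLoss p df D (marg p K) ≤ mutInfo p K := by
  refine sum_le_sum fun x _ => ?_
  rcases (hp.1 x).eq_or_lt with h | h
  · rw [← h, zero_mul, zero_mul]
  refine mul_le_mul_of_nonneg_left ?_ h.le
  rw [probBall_eq_sum_filter]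
  exact neg_logb_sum_le_klDiv (hK x) (isPMF_marg hp hK).1
    (fun y hy => (mul_pos h hy).trans_le (mul_le_marg hp hK x y))
    (mem_support_of_isFeasible hfeas h)

lemma bddBelow_achievableBallLogLosses [Fintype X] (hp : isPMF p) :
    BddBelow (achievableBallLogLosses p df D) :=
  ⟨0, by rintro _ ⟨Q, hQ, hQpos, rfl⟩; exact expectedBallLogLoss_nonneg hp hQ hQpos⟩

lemma sInf_le_expectedBallLogLoss_marg [Fintype X] (hp : isPMF p) (hK : ∀ x, isPMF (K x))
    (hfeas : IsFeasible p df D K) :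
    sInf (achievableBallLogLosses p df D) ≤ expectedBallLogLoss p df D (marg p K) :=
  csInf_le (bddBelow_achievableBallLogLosses hp)
    ⟨marg p K, isPMF_marg hp hK, fun _ hx => probBall_marg_pos hp hK hfeas hx, rfl⟩

end

theorem guaranteed_converse_general {X Y : Type*} [Fintype X] [Fintype Y]
    (p : X → ℝ) (df : X → Y → ℝ) (D : ℝ) (hp : isPMF p)
    (K : X → Y → ℝ) (hK : ∀ x, isPMF (K x))
    (hfeas : ∀ x, 0 < p x → ∀ y, ¬ df x y ≤ D → K x y = 0) :
    (∑ x, p x * (- Real.logb 2 (probBall (marg p K) df D x))) ≤ mutInfo p K ∧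
    sInf {r : ℝ | ∃ Q : Y → ℝ, isPMF Q ∧ (∀ x, 0 < p x → 0 < probBall Q df D x) ∧
        r = ∑ x, p x * (- Real.logb 2 (probBall Q df D x))} ≤
      ∑ x, p x * (- Real.logb 2 (probBall (marg p K) df D x)) ∧
    sInf {r : ℝ | ∃ Q : Y → ℝ, isPMF Q ∧ (∀ x, 0 < p x → 0 < probBall Q df D x) ∧
        r = ∑ x, p x * (- Real.logb 2 (probBall Q df D x))} ≤
      sInf {r : ℝ | ∃ K' : X → Y → ℝ, (∀ x, isPMF (K' x)) ∧
        (∀ x, 0 < p x → ∀ y, ¬ df x y ≤ D → K' x y = 0) ∧ r = mutInfo p K'} := by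
  refine ⟨expectedBallLogLoss_marg_le_mutInfo hp hK hfeas,
    sInf_le_expectedBallLogLoss_marg hp hK hfeas,
    le_csInf ⟨mutInfo p K, K, hK, hfeas, rfl⟩ ?_⟩
  rintro _ ⟨K', hK', hfeas', rfl⟩
  exact (sInf_le_expectedBallLogLoss_marg hp hK' hfeas').trans
    (expectedBallLogLoss_marg_le_mutInfo hp hK' hfeas')

/-- converse direction of the guaranteed-distortion identity.
For any feasible kernel `K` (i.e. `P(d(X,Y) ≤ D) = 1`) with induced marginal
`P_Y = marg p K`, `I(X;Y) = E_X[D(K(X)‖P_Y)] ≥ E[-log₂ P_Y(B_D(X))] ≥ R_X⁺(d,0)`;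
hence `R_X⁺(d,0) ≤ R_X(d,0)`. -/
theorem guaranteed_converse {X Y : Type*} [Fintype X] [Fintype Y] [Nonempty Y]
    (p : X → ℝ) (df : X → Y → ℝ) (D : ℝ) (hp : isPMF p)
    (K : X → Y → ℝ) (hK : ∀ x, isPMF (K x))
    (hfeas : ∀ x, 0 < p x → ∀ y, ¬ df x y ≤ D → K x y = 0) :
    (∑ x, p x * (- Real.logb 2 (probBall (marg p K) df D x))) ≤ mutInfo p K ∧
    sInf {r : ℝ | ∃ Q : Y → ℝ, isPMF Q ∧ (∀ x, 0 < p x → 0 < probBall Q df D x) ∧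
        r = ∑ x, p x * (- Real.logb 2 (probBall Q df D x))} ≤
      ∑ x, p x * (- Real.logb 2 (probBall (marg p K) df D x)) ∧
    sInf {r : ℝ | ∃ Q : Y → ℝ, isPMF Q ∧ (∀ x, 0 < p x → 0 < probBall Q df D x) ∧
        r = ∑ x, p x * (- Real.logb 2 (probBall Q df D x))} ≤
      sInf {r : ℝ | ∃ K' : X → Y → ℝ, (∀ x, isPMF (K' x)) ∧
        (∀ x, 0 < p x → ∀ y, ¬ df x y ≤ D → K' x y = 0) ∧ r = mutInfo p K'} :=
  guaranteed_converse_general p df D hp K hK hfeas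
end
end
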